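/- Let H be a Hilbert space and 1 ≤ p < ∞. If A ∈ L_{p,∞}(H) and B ∈ (L_{q,∞}(H))₀ with 1 ≤ p, q, r ≤ ∞ satisfying 1/r = 1/p + 1/q, then AB ∈ (L_{r,∞}(H))₀, i.e. t^{1/r} μ(t, AB) → 0 as t → ∞. -/
import Mathlib

open Filter

/-- The generalized singular value function `μ(t, T) = inf { ‖T - F‖ : rank F ≤ t }`. -/
noncomputable def mu {H₁ H₂ : Type*} [NormedAddCommGroup H₁] [NormedSpace ℂ H₁]
    [NormedAddCommGroup H₂] [NormedSpace ℂ H₂] (T : H₁ →L[ℂ] H₂) (t : ℝ) : ℝ :=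
  sInf {c : ℝ | ∃ F : H₁ →L[ℂ] H₂,
    LinearMap.rank (F : H₁ →ₗ[ℂ] H₂) ≤ (⌊t⌋₊ : Cardinal) ∧ c = ‖T - F‖}

lemma mu_nonneg {H₁ H₂ : Type*} [NormedAddCommGroup H₁] [NormedSpace ℂ H₁]
    [NormedAddCommGroup H₂] [NormedSpace ℂ H₂] (T : H₁ →L[ℂ] H₂) (t : ℝ) :
    0 ≤ mu T t := by
  apply Real.sInf_nonneg
  rintro x ⟨F, -, rfl⟩
  exact norm_nonneg _

lemma mu_set_nonempty {H₁ H₂ : Type*} [NormedAddCommGroup H₁] [NormedSpace ℂ H₁]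
    [NormedAddCommGroup H₂] [NormedSpace ℂ H₂] (T : H₁ →L[ℂ] H₂) (t : ℝ) :
    {c : ℝ | ∃ F : H₁ →L[ℂ] H₂,
      LinearMap.rank (F : H₁ →ₗ[ℂ] H₂) ≤ (⌊t⌋₊ : Cardinal) ∧ c = ‖T - F‖}.Nonempty := by
  refine ⟨‖T - 0‖, 0, ?_, rfl⟩
  simp

lemma mu_le {H₁ H₂ : Type*} [NormedAddCommGroup H₁] [NormedSpace ℂ H₁]
    [NormedAddCommGroup H₂] [NormedSpace ℂ H₂] (T F : H₁ →L[ℂ] H₂) (t : ℝ)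
    (hF : LinearMap.rank (F : H₁ →ₗ[ℂ] H₂) ≤ (⌊t⌋₊ : Cardinal)) :
    mu T t ≤ ‖T - F‖ := by
  apply csInf_le
  · exact ⟨0, by rintro x ⟨G, -, rfl⟩; exact norm_nonneg _⟩
  · exact ⟨F, hF, rfl⟩

lemma mu_exists_lt {H₁ H₂ : Type*} [NormedAddCommGroup H₁] [NormedSpace ℂ H₁]
    [NormedAddCommGroup H₂] [NormedSpace ℂ H₂] (T : H₁ →L[ℂ] H₂) (t : ℝ)
    {ε : ℝ} (hε : 0 < ε) :
    ∃ F : H₁ →L[ℂ] H₂, LinearMap.rank (F : H₁ →ₗ[ℂ] H₂) ≤ (⌊t⌋₊ : Cardinal) ∧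
      ‖T - F‖ < mu T t + ε := by
  obtain ⟨c, ⟨F, hF, rfl⟩, hc⟩ := Real.lt_sInf_add_pos (mu_set_nonempty T t) hε
  exact ⟨F, hF, hc⟩

lemma mu_comp_le {H : Type*} [NormedAddCommGroup H] [NormedSpace ℂ H]
    (A B : H →L[ℂ] H) (t : ℝ) :
    mu (A.comp B) t ≤ mu A (t/2) * mu B (t/2) := by
  set a := mu A (t/2)
  set b := mu B (t/2)
  have ha : 0 ≤ a := mu_nonneg A _
  have hb : 0 ≤ b := mu_nonneg B _
  refine le_of_forall_pos_le_add fun ε hε => ?_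
  set δ := min 1 (ε / (a + b + 1)) with hδdef
  have habpos : 0 < a + b + 1 := by linarith
  have hδ : 0 < δ := lt_min one_pos (div_pos hε habpos)
  obtain ⟨F₁, hF₁r, hF₁⟩ := mu_exists_lt A (t/2) hδ
  obtain ⟨F₂, hF₂r, hF₂⟩ := mu_exists_lt B (t/2) hδ
  set F := F₁.comp B + (A - F₁).comp F₂ with hFdef
  have hrank : LinearMap.rank (F : H →ₗ[ℂ] H) ≤ (⌊t⌋₊ : Cardinal) := by
    have h1 : LinearMap.rank (F : H →ₗ[ℂ] H) ≤
        LinearMap.rank (F₁ : H →ₗ[ℂ] H) + LinearMap.rank (F₂ : H →ₗ[ℂ] H) := by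
      have : (F : H →ₗ[ℂ] H) =
          ((F₁ : H →ₗ[ℂ] H).comp (B : H →ₗ[ℂ] H)) +
          (((A : H →ₗ[ℂ] H) - (F₁ : H →ₗ[ℂ] H)).comp (F₂ : H →ₗ[ℂ] H)) := by
        ext x; simp [hFdef]
      rw [this]
      refine (LinearMap.rank_add_le _ _).trans (add_le_add ?_ ?_)
      · exact LinearMap.rank_comp_le_left _ _
      · exact LinearMap.rank_comp_le_right _ _
    refine h1.trans ?_
    have hnat : ⌊t/2⌋₊ + ⌊t/2⌋₊ ≤ ⌊t⌋₊ := by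
      rcases le_or_gt t 0 with ht | ht
      · simp [Nat.floor_of_nonpos (by linarith : t/2 ≤ 0), Nat.floor_of_nonpos ht]
      · have h2 : (⌊t/2⌋₊ : ℝ) ≤ t/2 := Nat.floor_le (by positivity)
        have : ((⌊t/2⌋₊ + ⌊t/2⌋₊ : ℕ) : ℝ) ≤ t := by push_cast; linarith
        exact Nat.le_floor this
    calc LinearMap.rank (F₁ : H →ₗ[ℂ] H) + LinearMap.rank (F₂ : H →ₗ[ℂ] H)
        ≤ (⌊t/2⌋₊ : Cardinal) + (⌊t/2⌋₊ : Cardinal) := add_le_add hF₁r hF₂r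
      _ = ((⌊t/2⌋₊ + ⌊t/2⌋₊ : ℕ) : Cardinal) := by push_cast; ring
      _ ≤ (⌊t⌋₊ : Cardinal) := by exact_mod_cast Nat.cast_le.mpr hnat
  have hdiff : A.comp B - F = (A - F₁).comp (B - F₂) := by
    ext x; simp [hFdef]; abel
  have hnorm : ‖A.comp B - F‖ ≤ (a + δ) * (b + δ) := by
    rw [hdiff]
    calc ‖(A - F₁).comp (B - F₂)‖ ≤ ‖A - F₁‖ * ‖B - F₂‖ := ContinuousLinearMap.opNorm_comp_le _ _
      _ ≤ (a + δ) * (b + δ) :=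
        mul_le_mul hF₁.le hF₂.le (norm_nonneg _) (by linarith)
  have hδε : δ * (a + b + δ) ≤ ε := by
    have h1 : δ ≤ 1 := min_le_left _ _
    have h2 : δ ≤ ε / (a + b + 1) := min_le_right _ _
    have : δ * (a + b + δ) ≤ δ * (a + b + 1) := by nlinarith
    refine this.trans ?_
    calc δ * (a + b + 1) ≤ (ε / (a + b + 1)) * (a + b + 1) := by nlinarith
      _ = ε := div_mul_cancel₀ _ (by positivity)
  calc mu (A.comp B) t ≤ ‖A.comp B - F‖ := mu_le _ _ _ hrank
    _ ≤ (a + δ) * (b + δ) := hnorm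
    _ = a * b + δ * (a + b + δ) := by ring
    _ ≤ a * b + ε := by linarith

/-- If `A ∈ L_{p,∞}` and `B` is in the separable part of `L_{q,∞}`, then `AB` is in the
separable part of `L_{r,∞}` where `1/r = 1/p + 1/q`. -/
theorem comp_mem_separable_part {H : Type*} [NormedAddCommGroup H]
    [InnerProductSpace ℂ H] [CompleteSpace H]
    (p q r : ℝ) (hp : 1 ≤ p) (hq : 1 ≤ q) (hr : 1 ≤ r) (hpqr : 1 / r = 1 / p + 1 / q)
    (A B : H →L[ℂ] H)
    (hA : ∃ C : ℝ, ∀ t > (0 : ℝ), t ^ (1 / p) * mu A t ≤ C)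
    (hB : Tendsto (fun t : ℝ => t ^ (1 / q) * mu B t) atTop (nhds 0)) :
    Tendsto (fun t : ℝ => t ^ (1 / r) * mu (A.comp B) t) atTop (nhds 0) := by
  obtain ⟨C, hC⟩ := hA
  have hC0 : 0 ≤ C := by
    have := hC 1 one_pos
    have h1 : 0 ≤ (1:ℝ) ^ (1/p) * mu A 1 :=
      mul_nonneg (by positivity) (mu_nonneg A 1)
    linarith
  set g : ℝ → ℝ := fun t => (2:ℝ) ^ (1/r) * C * ((t/2) ^ (1/q) * mu B (t/2)) with hg
  have hgz : Tendsto g atTop (nhds 0) := by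
    have h2 : Tendsto (fun t : ℝ => t/2) atTop atTop :=
      Tendsto.atTop_div_const two_pos tendsto_id
    have := (hB.comp h2).const_mul ((2:ℝ) ^ (1/r) * C)
    simpa [hg, Function.comp] using this
  refine squeeze_zero' ?_ ?_ hgz
  · filter_upwards [eventually_ge_atTop (0:ℝ)] with t ht
    have := mu_nonneg (A.comp B) t
    positivity
  · filter_upwards [eventually_ge_atTop (2:ℝ)] with t ht
    have hs : (0:ℝ) < t/2 := by linarith
    have ht0 : (0:ℝ) < t := by linarith
    have hsplit : t ^ (1/r) = (2:ℝ) ^ (1/r) * ((t/2) ^ (1/p) * (t/2) ^ (1/q)) := by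
      have h1 : t = 2 * (t/2) := by ring
      conv_lhs => rw [h1]
      rw [Real.mul_rpow (by norm_num) hs.le, hpqr, Real.rpow_add hs]
    have hmu := mu_comp_le A B t
    have hmb : 0 ≤ mu B (t/2) := mu_nonneg B _
    have hma : 0 ≤ mu A (t/2) := mu_nonneg A _
    have hAb : (t/2) ^ (1/p) * mu A (t/2) ≤ C := hC _ hs
    have key : t ^ (1/r) * mu (A.comp B) t ≤
        (2:ℝ) ^ (1/r) * (((t/2) ^ (1/p) * mu A (t/2)) * ((t/2) ^ (1/q) * mu B (t/2))) := by
      rw [hsplit]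
      have h2r : (0:ℝ) ≤ (2:ℝ) ^ (1/r) := by positivity
      have hpp : (0:ℝ) ≤ (t/2) ^ (1/p) := by positivity
      have hqq : (0:ℝ) ≤ (t/2) ^ (1/q) := by positivity
      calc (2:ℝ) ^ (1/r) * ((t/2) ^ (1/p) * (t/2) ^ (1/q)) * mu (A.comp B) t
          ≤ (2:ℝ) ^ (1/r) * ((t/2) ^ (1/p) * (t/2) ^ (1/q)) * (mu A (t/2) * mu B (t/2)) := by
            apply mul_le_mul_of_nonneg_left hmu; positivity
        _ = (2:ℝ) ^ (1/r) * (((t/2) ^ (1/p) * mu A (t/2)) * ((t/2) ^ (1/q) * mu B (t/2))) := by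
            ring
    refine key.trans ?_
    rw [hg]
    have hfac : 0 ≤ (t/2) ^ (1/q) * mu B (t/2) := by positivity
    have : ((t/2) ^ (1/p) * mu A (t/2)) * ((t/2) ^ (1/q) * mu B (t/2)) ≤
        C * ((t/2) ^ (1/q) * mu B (t/2)) :=
      mul_le_mul_of_nonneg_right hAb hfac
    have h2r : (0:ℝ) ≤ (2:ℝ) ^ (1/r) := by positivity
    calc (2:ℝ) ^ (1/r) * (((t/2) ^ (1/p) * mu A (t/2)) * ((t/2) ^ (1/q) * mu B (t/2)))
        ≤ (2:ℝ) ^ (1/r) * (C * ((t/2) ^ (1/q) * mu B (t/2))) :=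
          mul_le_mul_of_nonneg_left this h2r
      _ = (2:ℝ) ^ (1/r) * C * ((t/2) ^ (1/q) * mu B (t/2)) := by ring
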